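/- As formal power series in q: Z(2) = [2], Z(3) = 2·[3], and Z(4) = [4] - (1/6)·[2]. -/

import Mathlib

/-!
The `n`-th summand of `Z(k)` is `φ(q^n)` for a fixed rational function `φ`, whose Taylor
coefficients follow from `(1 - q)^{-(j+1)} = ∑ C(j+i, j) q^i`: they are `d`, `d²` and
`C(d+1, 3) = (d³ - d)/6` respectively. Hence `Z(k) = ∑_{n,d} g(d) q^{nd}` with `g` a polynomial,
and matching the coefficient of `q^m` on both sides (a sum over the divisors `n` of `m`)
expresses each `Z(k)` as a combination of the brackets.
-/

open PowerSeries

/-- Sum of a family of power series over positive integers, coefficientwise. -/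
noncomputable def psum (f : ℕ → ℚ⟦X⟧) : ℚ⟦X⟧ :=
  PowerSeries.mk fun m => ∑ n ∈ Finset.Icc 1 m, PowerSeries.coeff m (f n)

/-- Double sum over pairs of positive integers, coefficientwise. -/
noncomputable def psum2 (f : ℕ → ℕ → ℚ⟦X⟧) : ℚ⟦X⟧ :=
  PowerSeries.mk fun m => ∑ p ∈ Finset.Icc 1 m ×ˢ Finset.Icc 1 m,
    PowerSeries.coeff m (f p.1 p.2)

/-- `[s] = (1/(s-1)!)·∑_{n,d≥1} d^{s-1} q^{nd}`. -/
noncomputable def bracket (s : ℕ) : ℚ⟦X⟧ :=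
  (1 / ((s - 1).factorial : ℚ)) • psum2 fun n d => ((d : ℚ) ^ (s - 1)) • X ^ (n * d)

noncomputable def Z2 : ℚ⟦X⟧ := psum fun n => X ^ n * ((1 - X ^ n)⁻¹) ^ 2
noncomputable def Z3 : ℚ⟦X⟧ := psum fun n => X ^ n * (1 + X ^ n) * ((1 - X ^ n)⁻¹) ^ 3
noncomputable def Z4 : ℚ⟦X⟧ := psum fun n => X ^ (2 * n) * ((1 - X ^ n)⁻¹) ^ 4

theorem Nat.succ_choose_two_add_choose_two (n : ℕ) : (n + 1).choose 2 + n.choose 2 = n ^ 2 := by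
  have h := Nat.add_one_mul_choose_eq n 1
  have h' := Nat.choose_succ_succ' n 1
  simp only [Nat.choose_one_right] at h h'
  nlinarith

namespace PowerSeries

variable {k : Type*} [Field k]

theorem inv_one_sub_X : ((1 : k⟦X⟧) - X)⁻¹ = mk 1 := by
  rw [inv_eq_iff_mul_eq_one (by simp), mk_one_mul_one_sub_eq_one]

theorem inv_one_sub_X_pow_succ (d : ℕ) :
    ((1 - X : k⟦X⟧)⁻¹) ^ (d + 1) = mk fun n => ((d + n).choose d : k) := by
  rw [inv_one_sub_X, mk_one_pow_eq_mk_choose_add]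

theorem X_mul_inv_one_sub_X_sq : X * ((1 - X : k⟦X⟧)⁻¹) ^ 2 = mk fun d => (d : k) := by
  ext (_ | d)
  · simp
  · rw [inv_one_sub_X_pow_succ, coeff_succ_X_mul]
    simp [add_comm]

theorem X_mul_one_add_X_mul_inv_one_sub_X_cube :
    X * (1 + X) * ((1 - X : k⟦X⟧)⁻¹) ^ 3 = mk fun d => (d : k) ^ 2 := by
  rw [inv_one_sub_X_pow_succ, mul_add, mul_one, add_mul, ← pow_two]
  ext (_ | _ | d)
  · simp
  · simp [coeff_X_pow_mul']
  · simp only [map_add, coeff_succ_X_mul, coeff_X_pow_mul', coeff_mk]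
    rw [if_pos (by omega), show 2 + (d + 1) = d + 2 + 1 by omega,
      show 2 + (d + 1 + 1 - 2) = d + 2 by omega, ← Nat.cast_add,
      Nat.succ_choose_two_add_choose_two, Nat.cast_pow]

theorem X_sq_mul_inv_one_sub_X_pow_four [CharZero k] :
    X ^ 2 * ((1 - X : k⟦X⟧)⁻¹) ^ 4 = mk fun d => ((d : k) ^ 3 - d) / 6 := by
  rw [inv_one_sub_X_pow_succ]
  ext (_ | _ | d)
  · simp
  · simp [coeff_X_pow_mul']
  · rw [coeff_X_pow_mul', if_pos (by omega), coeff_mk, coeff_mk,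
      show 3 + (d + 2 - 2) = d + 3 by omega, Nat.cast_choose_eq_ascPochhammer_div]
    simp only [ascPochhammer_succ_eval, ascPochhammer_one, Polynomial.eval_X, Nat.factorial]
    push_cast
    ring

theorem expand_inv (p : ℕ) (hp : p ≠ 0) (φ : k⟦X⟧) (h : constantCoeff φ ≠ 0) :
    expand p hp φ⁻¹ = (expand p hp φ)⁻¹ := by
  rw [eq_inv_iff_mul_eq_one (by simpa), ← map_mul, PowerSeries.inv_mul_cancel _ h, map_one]

theorem expand_inv_one_sub_X (p : ℕ) (hp : p ≠ 0) :
    expand p hp (1 - X : k⟦X⟧)⁻¹ = (1 - X ^ p)⁻¹ := by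
  rw [expand_inv _ _ _ (by simp)]
  simp

end PowerSeries

open Finset

theorem psum2_sub (f g : ℕ → ℕ → ℚ⟦X⟧) :
    psum2 (fun n d => f n d - g n d) = psum2 f - psum2 g := by
  ext m
  simp [psum2, sum_sub_distrib]

theorem psum2_smul (c : ℚ) (f : ℕ → ℕ → ℚ⟦X⟧) :
    psum2 (fun n d => c • f n d) = c • psum2 f := by
  ext m
  simp [psum2, mul_sum]

theorem coeff_psum2_smul_X_pow (g : ℕ → ℚ) (m : ℕ) :
    coeff m (psum2 fun n d => g d • X ^ (n * d)) =
      ∑ n ∈ Icc 1 m, if n ∣ m then g (m / n) else 0 := by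
  rw [psum2, coeff_mk, sum_product]
  refine sum_congr rfl fun n hn => ?_
  obtain ⟨hn1, hnm⟩ := mem_Icc.mp hn
  split_ifs with hdvd
  · obtain ⟨e, rfl⟩ := hdvd
    have he : 0 < e := Nat.pos_of_ne_zero fun he => by simp [he] at hnm; omega
    rw [sum_eq_single_of_mem e]
    · simp [Nat.mul_div_cancel_left _ hn1]
    · exact mem_Icc.mpr ⟨he, Nat.le_mul_of_pos_left e hn1⟩
    · intro d _ hde
      simp [coeff_X_pow, Nat.pos_iff_ne_zero.mp hn1, Ne.symm hde]
  · refine sum_eq_zero fun d _ => ?_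
    simp only [map_smul, coeff_X_pow, smul_eq_mul, mul_ite, mul_one, mul_zero]
    exact if_neg fun h => hdvd ⟨d, h⟩

theorem psum_eq_psum2_of_eq_expand (φ : ℚ⟦X⟧) (f : ℕ → ℚ⟦X⟧)
    (hf : ∀ n (hn : n ≠ 0), f n = expand n hn φ) :
    psum f = psum2 fun n d => coeff d φ • X ^ (n * d) := by
  ext m
  rw [coeff_psum2_smul_X_pow, psum, coeff_mk]
  refine sum_congr rfl fun n hn => ?_
  rw [hf n (Nat.one_le_iff_ne_zero.mp (mem_Icc.mp hn).1), coeff_expand]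

theorem Z2_eq_psum2 : Z2 = psum2 fun n d => (d : ℚ) • X ^ (n * d) := by
  rw [Z2, psum_eq_psum2_of_eq_expand (X * ((1 - X)⁻¹) ^ 2), X_mul_inv_one_sub_X_sq]
  · simp
  · intro n hn
    simp [expand_inv_one_sub_X]

theorem Z3_eq_psum2 : Z3 = psum2 fun n d => (d : ℚ) ^ 2 • X ^ (n * d) := by
  rw [Z3, psum_eq_psum2_of_eq_expand (X * (1 + X) * ((1 - X)⁻¹) ^ 3),
    X_mul_one_add_X_mul_inv_one_sub_X_cube]
  · simp
  · intro n hn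
    simp [expand_inv_one_sub_X]

theorem Z4_eq_psum2 : Z4 = psum2 fun n d => (((d : ℚ) ^ 3 - d) / 6) • X ^ (n * d) := by
  rw [Z4, psum_eq_psum2_of_eq_expand (X ^ 2 * ((1 - X)⁻¹) ^ 4),
    X_sq_mul_inv_one_sub_X_pow_four]
  · simp
  · intro n hn
    simp [expand_inv_one_sub_X, pow_mul']

/-- `Z(2) = [2]`, `Z(3) = 2·[3]`, and `Z(4) = [4] - (1/6)·[2]`. -/
theorem stmt2 :
    Z2 = bracket 2 ∧ Z3 = 2 • bracket 3 ∧ Z4 = bracket 4 - (1 / 6 : ℚ) • bracket 2 := by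
  refine ⟨?_, ?_, ?_⟩
  · simp [Z2_eq_psum2, bracket]
  · rw [Z3_eq_psum2, bracket, ← Nat.cast_smul_eq_nsmul ℚ, smul_smul]
    norm_num
  · rw [Z4_eq_psum2, bracket, bracket, ← psum2_smul, ← psum2_smul, ← psum2_smul, ← psum2_sub]
    congr 1
    funext n d
    rw [smul_smul, smul_smul, smul_smul, ← sub_smul]
    congr 1
    norm_num [Nat.factorial]
    ring
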